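/- With the honest pmf A_{i,j,h} and Byzantine pmf B_{i,j,h} = A_{i,j,h}(1-P_A) + (1-A_{i,j,h}) P_A/(2^q-1), the condition E[L|H_1] = E[L|H_0] is equivalent to α P_A = (Σ_i Σ_j (A_{i,j,1} − A_{i,j,0}) d_{i,j}) / (Σ_i Σ_j [(1 + 1/(2^q−1))(A_{i,j,1} − A_{i,j,0})] d_{i,j}), provided the denominator is nonzero. -/
import Mathlib


/-- Blinding condition: `E[L|H₁] = E[L|H₀]` iff `α P_A` equals the ratio of the weighted
sums, provided the denominator is nonzero. -/
theorem stmt_8 (N q : ℕ) (hq : 1 ≤ q) (α PA : ℝ)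
    (hα : α ∈ Set.Icc (0:ℝ) 1) (hPA : PA ∈ Set.Icc (0:ℝ) 1)
    (A0 A1 d : Fin N → Fin (2^q) → ℝ)
    (hA0 : ∀ i j, A0 i j ∈ Set.Icc (0:ℝ) 1) (hA1 : ∀ i j, A1 i j ∈ Set.Icc (0:ℝ) 1)
    (hsum0 : ∀ i, ∑ j, A0 i j = 1) (hsum1 : ∀ i, ∑ j, A1 i j = 1)
    (hden : ∑ i, ∑ j, (1 + 1 / ((2:ℝ)^q - 1)) * (A1 i j - A0 i j) * d i j ≠ 0) :
    ((∑ i, ∑ j, ((1 - α) * A1 i j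
          + α * (A1 i j * (1 - PA) + (1 - A1 i j) * PA / ((2:ℝ)^q - 1))) * d i j)
      = ∑ i, ∑ j, ((1 - α) * A0 i j
          + α * (A0 i j * (1 - PA) + (1 - A0 i j) * PA / ((2:ℝ)^q - 1))) * d i j)
    ↔ α * PA = (∑ i, ∑ j, (A1 i j - A0 i j) * d i j)
        / (∑ i, ∑ j, (1 + 1 / ((2:ℝ)^q - 1)) * (A1 i j - A0 i j) * d i j) := by
  set c : ℝ := 1 / ((2:ℝ)^q - 1) with hc
  set S : ℝ := ∑ i, ∑ j, (1 + c) * (A1 i j - A0 i j) * d i j with hS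
  set T : ℝ := ∑ i, ∑ j, (A1 i j - A0 i j) * d i j with hT
  have key : (∑ i, ∑ j, ((1 - α) * A1 i j
          + α * (A1 i j * (1 - PA) + (1 - A1 i j) * PA * c)) * d i j)
      - (∑ i, ∑ j, ((1 - α) * A0 i j
          + α * (A0 i j * (1 - PA) + (1 - A0 i j) * PA * c)) * d i j)
      = T - α * PA * S := by
    rw [hT, hS, Finset.mul_sum, ← Finset.sum_sub_distrib, ← Finset.sum_sub_distrib]
    refine Finset.sum_congr rfl fun i _ => ?_
    rw [Finset.mul_sum, ← Finset.sum_sub_distrib, ← Finset.sum_sub_distrib]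
    refine Finset.sum_congr rfl fun j _ => ?_
    ring
  have hdiv : ∀ x y : ℝ, x * PA / ((2:ℝ)^q - 1) = x * PA * c ∨ True := fun _ _ => Or.inr trivial
  have hrw : ∀ A : Fin N → Fin (2^q) → ℝ,
      (∑ i, ∑ j, ((1 - α) * A i j + α * (A i j * (1 - PA) + (1 - A i j) * PA / ((2:ℝ)^q - 1))) * d i j)
      = ∑ i, ∑ j, ((1 - α) * A i j + α * (A i j * (1 - PA) + (1 - A i j) * PA * c)) * d i j := by
    intro A
    refine Finset.sum_congr rfl fun i _ => Finset.sum_congr rfl fun j _ => ?_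
    rw [hc]; ring
  rw [hrw A1, hrw A0, ← sub_eq_zero, key, sub_eq_zero, eq_div_iff hden]
  constructor <;> intro h <;> linarith
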